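/- Let H, K be Hilbert spaces, Γ ⊆ L(H,K) a concrete C*-module with [ΓH] = K, 𝔅 := [Γ*Γ], ℭ := [ΓΓ*], and A ⊆ L(H) a nondegenerate C*-algebra with [A𝔅] ⊆ A. If (u_i) is a bounded approximate unit of the C*-algebra ℭ and T ∈ Ind_Γ(A), then for every γ ∈ Γ the nets (u_i T u_i γ) and (u_i* T* u_i* γ) converge in norm to Tγ and T*γ, respectively. -/

import Mathlib

/-!
For a bounded net `v i` of operators, the vectors `x` with `v i x → x` form a closed subspace
(boundedness gives equicontinuity), so such convergence need only be checked on generators.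
Since `Γ = [ΓΓ*Γ]`, a left approximate unit of `ℭ = [ΓΓ*]` satisfies `v i γ → γ` on `Γ`, hence
also on `[ΓA]`, which contains `Tγ`. Then `v i T v i γ = v i T (v i γ - γ) + v i Tγ → Tγ`.
The adjoint net `u i*` is again a left approximate unit on the generators `γ₁γ₂*` of `ℭ`, because
`(γ₁γ₂* u i)* = u i* γ₂γ₁*`, and `T*` satisfies the same hypothesis as `T`.
-/

noncomputable section
open ContinuousLinearMap Filter

def clspan {E : Type*} [NormedAddCommGroup E] [NormedSpace ℂ E] (S : Set E) : Set E :=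
  ((Submodule.span ℂ S).topologicalClosure : Set E)

theorem subset_clspan {E : Type*} [NormedAddCommGroup E] [NormedSpace ℂ E] (S : Set E) :
    S ⊆ clspan S :=
  fun _ hx => (Submodule.span ℂ S).le_topologicalClosure (Submodule.subset_span hx)

section BoundedFamily

variable {ι : Type*}

def tendstoSelfSubmodule {𝕜 E : Type*} [Semiring 𝕜] [AddCommMonoid E] [Module 𝕜 E]
    [TopologicalSpace E] [ContinuousAdd E] [ContinuousConstSMul 𝕜 E]
    (F : ι → E →L[𝕜] E) (l : Filter ι) : Submodule 𝕜 E where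
  carrier := {x | Tendsto (F · x) l (nhds x)}
  zero_mem' := by simpa using tendsto_const_nhds
  add_mem' {x y} (hx : Tendsto _ _ _) (hy : Tendsto _ _ _) :=
    show Tendsto _ _ _ by simpa only [map_add] using hx.add hy
  smul_mem' c x (hx : Tendsto _ _ _) := show Tendsto _ _ _ by
    simpa only [map_smul] using hx.const_smul c

variable {l : Filter ι} {𝕜 E : Type*} [NontriviallyNormedField 𝕜] [NormedAddCommGroup E]
  [NormedSpace 𝕜 E] {F : ι → E →L[𝕜] E}

theorem isClosed_tendstoSelfSubmodule (hF : ∃ C, ∀ i, ‖F i‖ ≤ C) :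
    IsClosed (tendstoSelfSubmodule F l : Set E) :=
  have hequi : Equicontinuous ((↑) ∘ F) := ((NormedSpace.equicontinuous_TFAE F).out 5 1).mp hF
  hequi.isClosed_setOfPred_tendsto continuous_id

theorem tendsto_apply_of_bounded (hF : ∃ C, ∀ i, ‖F i‖ ≤ C) {y : ι → E} {y₀ z : E}
    (hy : Tendsto y l (nhds y₀)) (hz : Tendsto (F · y₀) l (nhds z)) :
    Tendsto (fun i => F i (y i)) l (nhds z) := by
  obtain ⟨C, hC⟩ := hF
  have hsmall : Tendsto (fun i => F i (y i - y₀)) l (nhds 0) :=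
    squeeze_zero_norm (fun i => (F i).le_of_opNorm_le (hC i) _)
      (by simpa using (tendsto_sub_nhds_zero_iff.mpr hy).norm.const_mul C)
  simpa using hsmall.add hz

end BoundedFamily

theorem tendsto_self_of_mem_clspan {ι E : Type*} {l : Filter ι} [NormedAddCommGroup E]
    [NormedSpace ℂ E] {F : ι → E →L[ℂ] E} (hF : ∃ C, ∀ i, ‖F i‖ ≤ C) {S : Set E}
    (hS : ∀ s ∈ S, Tendsto (F · s) l (nhds s)) {x : E} (hx : x ∈ clspan S) :
    Tendsto (F · x) l (nhds x) :=
  (Submodule.span ℂ S).topologicalClosure_minimal (t := tendstoSelfSubmodule F l)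
    (Submodule.span_le.mpr hS) (isClosed_tendstoSelfSubmodule hF) hx

section LeftMultiplication

variable {G H K ι : Type*} [NormedAddCommGroup G] [NormedSpace ℂ G] [NormedAddCommGroup H]
  [NormedSpace ℂ H] [NormedAddCommGroup K] [NormedSpace ℂ K] {l : Filter ι}
  {v : ι → K →L[ℂ] K}

theorem exists_norm_compL_le (hv : ∃ C, ∀ i, ‖v i‖ ≤ C) :
    ∃ C, ∀ i, ‖(compL ℂ H K K (v i) : (H →L[ℂ] K) →L[ℂ] H →L[ℂ] K)‖ ≤ C :=
  let ⟨C, hC⟩ := hv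
  ⟨C, fun i => (opNorm_le_bound _ (norm_nonneg _) (opNorm_comp_le (v i))).trans (hC i)⟩

theorem tendsto_comp_comp_right {x : H →L[ℂ] K} (h : Tendsto (fun i => v i ∘L x) l (nhds x))
    (a : G →L[ℂ] H) : Tendsto (fun i => v i ∘L (x ∘L a)) l (nhds (x ∘L a)) := by
  simpa only [Function.comp_def, flip_apply, compL_apply, comp_assoc] using
    (((compL ℂ G H K).flip a).continuous.tendsto x).comp h

theorem tendsto_comp_of_mem_clspan (hv : ∃ C, ∀ i, ‖v i‖ ≤ C) {S : Set (H →L[ℂ] K)}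
    (hS : ∀ s ∈ S, Tendsto (fun i => v i ∘L s) l (nhds s)) {x : H →L[ℂ] K} (hx : x ∈ clspan S) :
    Tendsto (fun i => v i ∘L x) l (nhds x) :=
  tendsto_self_of_mem_clspan (F := fun i => compL ℂ H K K (v i)) (exists_norm_compL_le hv) hS hx

theorem tendsto_comp_comp_comp (hv : ∃ C, ∀ i, ‖v i‖ ≤ C) (T : K →L[ℂ] K) {γ : H →L[ℂ] K}
    (hγ : Tendsto (fun i => v i ∘L γ) l (nhds γ))
    (hTγ : Tendsto (fun i => v i ∘L (T ∘L γ)) l (nhds (T ∘L γ))) :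
    Tendsto (fun i => (v i ∘L T ∘L v i) ∘L γ) l (nhds (T ∘L γ)) := by
  simpa only [Function.comp_apply, compL_apply, comp_assoc] using
    tendsto_apply_of_bounded (F := fun i => compL ℂ H K K (v i)) (exists_norm_compL_le hv)
      (((compL ℂ H K K T).continuous.tendsto γ).comp hγ) hTγ

end LeftMultiplication

section HilbertModule

variable {H K ι : Type*} [NormedAddCommGroup H] [InnerProductSpace ℂ H] [CompleteSpace H]
  [NormedAddCommGroup K] [InnerProductSpace ℂ K] [CompleteSpace K] {l : Filter ι}
  {v : ι → K →L[ℂ] K} {Γ : Set (H →L[ℂ] K)}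

theorem tendsto_comp_of_tendsto_comp_comp_adjoint
    (hΓ : Γ ⊆ clspan (Set.image2 (fun (S : K →L[ℂ] K) (T : H →L[ℂ] K) => S ∘L T)
      (Set.image2 (fun (S T : H →L[ℂ] K) => S ∘L adjoint T) Γ Γ) Γ))
    (hv : ∃ C, ∀ i, ‖v i‖ ≤ C)
    (hvΓΓ : ∀ γ₁ ∈ Γ, ∀ γ₂ ∈ Γ,
      Tendsto (fun i => v i ∘L (γ₁ ∘L adjoint γ₂)) l (nhds (γ₁ ∘L adjoint γ₂)))
    {γ : H →L[ℂ] K} (hγ : γ ∈ Γ) :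
    Tendsto (fun i => v i ∘L γ) l (nhds γ) := by
  refine tendsto_comp_of_mem_clspan hv ?_ (hΓ hγ)
  rintro _ ⟨_, ⟨γ₁, hγ₁, γ₂, hγ₂, rfl⟩, γ₃, -, rfl⟩
  exact tendsto_comp_comp_right (hvΓΓ γ₁ hγ₁ γ₂ hγ₂) γ₃

theorem tendsto_comp_comp_comp_of_comp_mem_clspan (A : Set (H →L[ℂ] H))
    (hΓ : Γ ⊆ clspan (Set.image2 (fun (S : K →L[ℂ] K) (T : H →L[ℂ] K) => S ∘L T)
      (Set.image2 (fun (S T : H →L[ℂ] K) => S ∘L adjoint T) Γ Γ) Γ))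
    (hv : ∃ C, ∀ i, ‖v i‖ ≤ C)
    (hvΓΓ : ∀ γ₁ ∈ Γ, ∀ γ₂ ∈ Γ,
      Tendsto (fun i => v i ∘L (γ₁ ∘L adjoint γ₂)) l (nhds (γ₁ ∘L adjoint γ₂)))
    {T : K →L[ℂ] K}
    (hT : ∀ γ ∈ Γ, T ∘L γ ∈
      clspan (Set.image2 (fun (γ' : H →L[ℂ] K) (a : H →L[ℂ] H) => γ' ∘L a) Γ A))
    {γ : H →L[ℂ] K} (hγ : γ ∈ Γ) :
    Tendsto (fun i => (v i ∘L T ∘L v i) ∘L γ) l (nhds (T ∘L γ)) := by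
  have hvΓ := fun γ (hγ : γ ∈ Γ) => tendsto_comp_of_tendsto_comp_comp_adjoint hΓ hv hvΓΓ hγ
  refine tendsto_comp_comp_comp hv T (hvΓ γ hγ) (tendsto_comp_of_mem_clspan hv ?_ (hT γ hγ))
  rintro _ ⟨γ', hγ', a, -, rfl⟩
  exact tendsto_comp_comp_right (hvΓ γ' hγ') a

end HilbertModule

theorem stmt12_general
    {H K : Type*} [NormedAddCommGroup H] [InnerProductSpace ℂ H] [CompleteSpace H]
    [NormedAddCommGroup K] [InnerProductSpace ℂ K] [CompleteSpace K]
    (Γ : Set (H →L[ℂ] K))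
    (hΓ : clspan (Set.image2 (fun (S : K →L[ℂ] K) (T : H →L[ℂ] K) => S ∘L T)
        (Set.image2 (fun (S T : H →L[ℂ] K) => S ∘L adjoint T) Γ Γ) Γ) = Γ)
    (ℭ : Set (K →L[ℂ] K))
    (hℭ : ℭ = clspan (Set.image2 (fun (S T : H →L[ℂ] K) => S ∘L adjoint T) Γ Γ))
    (A : Set (H →L[ℂ] H))
    -- a bounded approximate unit `(u_i)` of `ℭ`:
    {ι : Type*} [SemilatticeSup ι]
    (u : ι → (K →L[ℂ] K))
    (hubdd : ∃ C : ℝ, ∀ i, ‖u i‖ ≤ C)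
    (huleft : ∀ c ∈ ℭ, Tendsto (fun i => u i ∘L c) atTop (nhds c))
    (huright : ∀ c ∈ ℭ, Tendsto (fun i => c ∘L u i) atTop (nhds c))
    -- `T ∈ Ind_Γ(A)`:
    (T : K →L[ℂ] K)
    (hT : ∀ γ ∈ Γ, T ∘L γ ∈
        clspan (Set.image2 (fun (γ' : H →L[ℂ] K) (a : H →L[ℂ] H) => γ' ∘L a) Γ A))
    (hTadj : ∀ γ ∈ Γ, adjoint T ∘L γ ∈
        clspan (Set.image2 (fun (γ' : H →L[ℂ] K) (a : H →L[ℂ] H) => γ' ∘L a) Γ A)) :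
    ∀ γ ∈ Γ,
      Tendsto (fun i => (u i ∘L T ∘L u i) ∘L γ) atTop (nhds (T ∘L γ)) ∧
      Tendsto (fun i => (adjoint (u i) ∘L adjoint T ∘L adjoint (u i)) ∘L γ) atTop
        (nhds (adjoint T ∘L γ)) := by
  obtain ⟨C, hC⟩ := hubdd
  have hgen : ∀ γ₁ ∈ Γ, ∀ γ₂ ∈ Γ, γ₁ ∘L adjoint γ₂ ∈ ℭ := fun γ₁ h₁ γ₂ h₂ =>
    hℭ ▸ subset_clspan _ ⟨γ₁, h₁, γ₂, h₂, rfl⟩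
  have hadj : ∀ γ₁ ∈ Γ, ∀ γ₂ ∈ Γ, Tendsto (fun i => adjoint (u i) ∘L (γ₁ ∘L adjoint γ₂)) atTop
      (nhds (γ₁ ∘L adjoint γ₂)) := fun γ₁ h₁ γ₂ h₂ => by
    simpa only [Function.comp_def, adjoint_comp, adjoint_adjoint, comp_assoc] using
      (adjoint.continuous.tendsto _).comp (huright _ (hgen γ₂ h₂ γ₁ h₁))
  intro γ hγ
  exact ⟨tendsto_comp_comp_comp_of_comp_mem_clspan A hΓ.superset ⟨C, hC⟩
      (fun γ₁ h₁ γ₂ h₂ => huleft _ (hgen γ₁ h₁ γ₂ h₂)) hT hγ,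
    tendsto_comp_comp_comp_of_comp_mem_clspan A hΓ.superset
      ⟨C, fun i => (adjoint.norm_map (u i)).trans_le (hC i)⟩ hadj hTadj hγ⟩

/-- With `Γ ⊆ L(H,K)` a concrete C*-module with `[ΓH]=K`, `𝔅 = [Γ*Γ]`,
`ℭ = [ΓΓ*]`, and `A ⊆ L(H)` a nondegenerate C*-algebra with `[A𝔅] ⊆ A`: if `(u_i)` is a
bounded approximate unit of `ℭ` and `T ∈ Ind_Γ(A)`, then for every `γ ∈ Γ` the nets
`u_i T u_i γ` and `u_i* T* u_i* γ` converge in norm to `Tγ` and `T*γ`. -/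
theorem stmt12
    {H K : Type*} [NormedAddCommGroup H] [InnerProductSpace ℂ H] [CompleteSpace H]
    [NormedAddCommGroup K] [InnerProductSpace ℂ K] [CompleteSpace K]
    (Γ : Set (H →L[ℂ] K))
    (hΓclosed : clspan Γ = Γ)
    (hΓ : clspan (Set.image2 (fun (S : K →L[ℂ] K) (T : H →L[ℂ] K) => S ∘L T)
        (Set.image2 (fun (S T : H →L[ℂ] K) => S ∘L adjoint T) Γ Γ) Γ) = Γ)
    (hΓH : (Submodule.span ℂ {x : K | ∃ γ ∈ Γ, ∃ ζ : H, γ ζ = x}).topologicalClosure = ⊤)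
    (ℭ : Set (K →L[ℂ] K))
    (hℭ : ℭ = clspan (Set.image2 (fun (S T : H →L[ℂ] K) => S ∘L adjoint T) Γ Γ))
    (A : Set (H →L[ℂ] H))
    (hAclosed : clspan A = A) (hAmul : ∀ a ∈ A, ∀ a' ∈ A, a ∘L a' ∈ A)
    (hAstar : ∀ a ∈ A, adjoint a ∈ A)
    (hAnd : (Submodule.span ℂ {x : H | ∃ a ∈ A, ∃ ζ : H, a ζ = x}).topologicalClosure = ⊤)
    (hA𝔅 : clspan (Set.image2 (fun (a b : H →L[ℂ] H) => a ∘L b) A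
        (clspan (Set.image2 (fun (S T : H →L[ℂ] K) => adjoint S ∘L T) Γ Γ))) ⊆ A)
    -- a bounded approximate unit `(u_i)` of `ℭ`:
    {ι : Type*} [Nonempty ι] [SemilatticeSup ι]
    (u : ι → (K →L[ℂ] K))
    (humem : ∀ i, u i ∈ ℭ)
    (hubdd : ∃ C : ℝ, ∀ i, ‖u i‖ ≤ C)
    (huleft : ∀ c ∈ ℭ, Tendsto (fun i => u i ∘L c) atTop (nhds c))
    (huright : ∀ c ∈ ℭ, Tendsto (fun i => c ∘L u i) atTop (nhds c))
    -- `T ∈ Ind_Γ(A)`: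
    (T : K →L[ℂ] K)
    (hT : ∀ γ ∈ Γ, T ∘L γ ∈
        clspan (Set.image2 (fun (γ' : H →L[ℂ] K) (a : H →L[ℂ] H) => γ' ∘L a) Γ A))
    (hTadj : ∀ γ ∈ Γ, adjoint T ∘L γ ∈
        clspan (Set.image2 (fun (γ' : H →L[ℂ] K) (a : H →L[ℂ] H) => γ' ∘L a) Γ A)) :
    ∀ γ ∈ Γ,
      Tendsto (fun i => (u i ∘L T ∘L u i) ∘L γ) atTop (nhds (T ∘L γ)) ∧
      Tendsto (fun i => (adjoint (u i) ∘L adjoint T ∘L adjoint (u i)) ∘L γ) atTop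
        (nhds (adjoint T ∘L γ)) :=
  stmt12_general Γ hΓ ℭ hℭ A u hubdd huleft huright T hT hTadj
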